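/- Let S be a finite set, let p(·|z) and p̂(·|z) be probability mass functions on S for each z ∈ S, and let ρ^0 = ρ̂^0 be a common initial probability mass function on S, with marginals defined recursively by ρ^{t+1}(z') = Σ_{z∈S} ρ^t(z) p(z'|z) and ρ̂^{t+1}(z') = Σ_{z∈S} ρ̂^t(z) p̂(z'|z). Suppose there is ε_P ≥ 0 such that for every t, Σ_{z∈S} ρ^t(z) · TV(p(·|z), p̂(·|z)) ≤ ε_P. Let f : S → ℝ^d satisfy |f(z)| ≤ B_x for all z ∈ S. Then for every k ≥ 0, |Σ_{z∈S} ρ^k(z) f(z) − Σ_{z∈S} ρ̂^k(z) f(z)| ≤ 2 k B_x ε_P. -/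
import Mathlib


open scoped BigOperators

/-- Total variation distance between two probability mass functions on a finite set. -/
noncomputable def TV {S : Type*} [Fintype S] (μ ν : S → ℝ) : ℝ :=
  (1 / 2) * ∑ z, |μ z - ν z|

/-- Non-stationary prediction error bound: the expected latent state under the true
dynamics and under the world-model dynamics differ after `k` steps by at most
`2 * k * Bx * εP`. -/
theorem stmt4 {S : Type*} [Fintype S] {d : ℕ}
    (p ph : S → S → ℝ)
    (hp0 : ∀ z z', 0 ≤ p z z') (hp1 : ∀ z, ∑ z', p z z' = 1)
    (hph0 : ∀ z z', 0 ≤ ph z z') (hph1 : ∀ z, ∑ z', ph z z' = 1)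
    (ρ ρh : ℕ → S → ℝ)
    (hρ00 : ∀ z, 0 ≤ ρ 0 z) (hρ01 : ∑ z, ρ 0 z = 1)
    (hinit : ρ 0 = ρh 0)
    (hρrec : ∀ t z', ρ (t + 1) z' = ∑ z, ρ t z * p z z')
    (hρhrec : ∀ t z', ρh (t + 1) z' = ∑ z, ρh t z * ph z z')
    (εP : ℝ) (hεP : 0 ≤ εP)
    (hstep : ∀ t, ∑ z, ρ t z * TV (p z) (ph z) ≤ εP)
    (f : S → EuclideanSpace ℝ (Fin d)) (Bx : ℝ) (hf : ∀ z, ‖f z‖ ≤ Bx) :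
    ∀ k : ℕ, ‖(∑ z, ρ k z • f z) - ∑ z, ρh k z • f z‖ ≤ 2 * k * Bx * εP := by
  -- nonnegativity of ρ t
  have hρpos : ∀ t z, 0 ≤ ρ t z := by
    intro t
    induction t with
    | zero => exact hρ00
    | succ t ih =>
      intro z'
      rw [hρrec]
      exact Finset.sum_nonneg fun z _ => mul_nonneg (ih z) (hp0 z z')
  -- L1 bound by induction
  have hL1 : ∀ k, ∑ z, |ρ k z - ρh k z| ≤ 2 * k * εP := by
    intro k
    induction k with
    | zero => simp [hinit]
    | succ k ih =>
      have key : ∑ z', |ρ (k+1) z' - ρh (k+1) z'|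
          ≤ (∑ z, ρ k z * ∑ z', |p z z' - ph z z'|) + ∑ z, |ρ k z - ρh k z| := by
        calc ∑ z', |ρ (k+1) z' - ρh (k+1) z'|
            = ∑ z', |(∑ z, ρ k z * (p z z' - ph z z')) + ∑ z, (ρ k z - ρh k z) * ph z z'| := by
              apply Finset.sum_congr rfl
              intro z' _
              rw [hρrec, hρhrec]
              congr 1
              rw [← Finset.sum_add_distrib, ← Finset.sum_sub_distrib]
              exact Finset.sum_congr rfl fun z _ => by ring
          _ ≤ ∑ z', (|∑ z, ρ k z * (p z z' - ph z z')| + |∑ z, (ρ k z - ρh k z) * ph z z'|) :=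
              Finset.sum_le_sum fun z' _ => abs_add_le _ _
          _ ≤ ∑ z', ((∑ z, ρ k z * |p z z' - ph z z'|) + ∑ z, |ρ k z - ρh k z| * ph z z') := by
              apply Finset.sum_le_sum
              intro z' _
              gcongr
              · calc |∑ z, ρ k z * (p z z' - ph z z')|
                    ≤ ∑ z, |ρ k z * (p z z' - ph z z')| := Finset.abs_sum_le_sum_abs _ _
                  _ = ∑ z, ρ k z * |p z z' - ph z z'| := by
                      apply Finset.sum_congr rfl
                      intro z _
                      rw [abs_mul, abs_of_nonneg (hρpos k z)]
              · calc |∑ z, (ρ k z - ρh k z) * ph z z'|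
                    ≤ ∑ z, |(ρ k z - ρh k z) * ph z z'| := Finset.abs_sum_le_sum_abs _ _
                  _ = ∑ z, |ρ k z - ρh k z| * ph z z' := by
                      apply Finset.sum_congr rfl
                      intro z _
                      rw [abs_mul, abs_of_nonneg (hph0 z z')]
          _ = (∑ z, ρ k z * ∑ z', |p z z' - ph z z'|) + ∑ z, |ρ k z - ρh k z| := by
              rw [Finset.sum_add_distrib]
              congr 1
              · rw [Finset.sum_comm]
                exact Finset.sum_congr rfl fun z _ => by rw [← Finset.mul_sum]
              · rw [Finset.sum_comm]
                apply Finset.sum_congr rfl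
                intro z _
                rw [← Finset.mul_sum, hph1, mul_one]
      have hTVsum : ∑ z, ρ k z * ∑ z', |p z z' - ph z z'| ≤ 2 * εP := by
        have := hstep k
        have heq : ∑ z, ρ k z * ∑ z', |p z z' - ph z z'| = 2 * ∑ z, ρ k z * TV (p z) (ph z) := by
          rw [Finset.mul_sum]
          apply Finset.sum_congr rfl
          intro z _
          simp [TV]
          ring
        rw [heq]
        linarith
      have : ∑ z', |ρ (k+1) z' - ρh (k+1) z'| ≤ 2 * εP + 2 * k * εP := by
        linarith
      calc ∑ z', |ρ (k+1) z' - ρh (k+1) z'| ≤ 2 * εP + 2 * k * εP := this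
        _ = 2 * (k+1 : ℕ) * εP := by push_cast; ring
  -- Bx nonneg
  have hS : Nonempty S := by
    by_contra h
    rw [not_nonempty_iff] at h
    simp [Finset.univ_eq_empty] at hρ01
  obtain ⟨z₀⟩ := hS
  have hBx : 0 ≤ Bx := le_trans (norm_nonneg _) (hf z₀)
  intro k
  calc ‖(∑ z, ρ k z • f z) - ∑ z, ρh k z • f z‖
      = ‖∑ z, (ρ k z - ρh k z) • f z‖ := by
        rw [← Finset.sum_sub_distrib]
        congr 1
        apply Finset.sum_congr rfl
        intro z _
        rw [sub_smul]
    _ ≤ ∑ z, ‖(ρ k z - ρh k z) • f z‖ := norm_sum_le _ _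
    _ = ∑ z, |ρ k z - ρh k z| * ‖f z‖ := by
        apply Finset.sum_congr rfl
        intro z _
        rw [norm_smul, Real.norm_eq_abs]
    _ ≤ ∑ z, |ρ k z - ρh k z| * Bx :=
        Finset.sum_le_sum fun z _ => mul_le_mul_of_nonneg_left (hf z) (abs_nonneg _)
    _ = (∑ z, |ρ k z - ρh k z|) * Bx := by rw [← Finset.sum_mul]
    _ ≤ (2 * k * εP) * Bx := mul_le_mul_of_nonneg_right (hL1 k) hBx
    _ = 2 * k * Bx * εP := by ring
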